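/- Let n ≥ 3 and l ≥ 1, and let C_n·P_l be the graph obtained by attaching a path P_l on l vertices to a cycle C_n by identifying one endpoint of the path with a vertex of the cycle. Then ν(C_n·P_l) = floor(n/3) + floor((l - ξ₃(n) + 1)/3), where ξ₃(n) = 1 if n ≡ 0 or 1 (mod 3) and ξ₃(n) = 0 if n ≡ 2 (mod 3). -/

import Mathlib

open SimpleGraph

/-- `M` is an induced matching of the simple graph `G`: every element of `M` is an
edge of `G`, and no edge of `G` joins (endpoints of) two distinct edges of `M`
(in particular the edges of `M` are pairwise disjoint). -/
def SimpleGraph.IsInducedMatching {V : Type*} (G : SimpleGraph V)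
    (M : Finset (Sym2 V)) : Prop :=
  (∀ e ∈ M, e ∈ G.edgeSet) ∧
    ∀ e ∈ M, ∀ f ∈ M, e ≠ f → ∀ u ∈ e, ∀ v ∈ f, ¬ G.Adj u v

/-- The induced matching number `ν(G)`: the maximum size of an induced matching. -/
noncomputable def SimpleGraph.inducedMatchingNumber {V : Type*} (G : SimpleGraph V) : ℕ :=
  sSup {k : ℕ | ∃ M : Finset (Sym2 V), G.IsInducedMatching M ∧ M.card = k}

/-- The graph obtained from `G` by deleting all vertices outside `A`
(keeping the ambient vertex type, deleted vertices become isolated). -/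
def SimpleGraph.restrictTo {V : Type*} (G : SimpleGraph V) (A : Set V) : SimpleGraph V where
  Adj a b := G.Adj a b ∧ a ∈ A ∧ b ∈ A
  symm := ⟨fun a b h => ⟨h.1.symm, h.2.2, h.2.1⟩⟩
  loopless := ⟨fun a h => G.irrefl h.1⟩

/-- `Γ_G(S)`: the set of vertices of `G` at distance exactly one from the set `S`. -/
def SimpleGraph.gammaSet {V : Type*} (G : SimpleGraph V) (S : Set V) : Set V :=
  {v | v ∉ S ∧ ∃ u ∈ S, G.Adj v u}

/-- Label (in `ℕ`) of the `k`-th vertex (0-indexed) of the bridge path: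
`z_1 = x_1 = 0` and `z_{k+1} = n + k - 1` for `k ≥ 1`. -/
def zVert (n : ℕ) (k : ℕ) : ℕ := if k = 0 then 0 else n + k - 1

/-- Label of the `j`-th vertex (0-indexed) of the second cycle `C_m`:
`y_1 = z_l` and `y_{j+1} = n + l - 2 + j` for `j ≥ 1`. -/
def yVert (n l : ℕ) (j : ℕ) : ℕ := if j = 0 then zVert n (l - 1) else n + l - 2 + j

/-- The graph `C_n · P_l` on vertex labels in `ℕ`: a cycle on `0, …, n-1`
together with a path on `l` vertices attached at the vertex `0`. -/
def cyclePathGraph (n l : ℕ) : SimpleGraph ℕ :=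
  SimpleGraph.fromRel (fun a b =>
    (∃ i < n, a = i ∧ b = (i + 1) % n) ∨
    (∃ k, k + 1 < l ∧ a = zVert n k ∧ b = zVert n (k + 1)))

/-- The dumbbell graph `C_n · P_l · C_m` on vertex labels in `ℕ`: cycles `C_n` and
`C_m` joined by a path on `l` vertices, the endpoints of the path being identified
with one vertex of each cycle. Its vertices are `0, …, n + m + l - 3`. -/
def dumbbell (n l m : ℕ) : SimpleGraph ℕ :=
  SimpleGraph.fromRel (fun a b =>
    (∃ i < n, a = i ∧ b = (i + 1) % n) ∨
    (∃ k, k + 1 < l ∧ a = zVert n k ∧ b = zVert n (k + 1)) ∨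
    (∃ j < m, a = yVert n l j ∧ b = yVert n l ((j + 1) % m)))

/-- `ξ₃(k) = 1` if `k ≡ 0, 1 (mod 3)`, and `ξ₃(k) = 0` if `k ≡ 2 (mod 3)`. -/
def xi3 (k : ℕ) : ℕ := if k % 3 = 2 then 0 else 1

/-!
Orient the edges of `C_n · P_l` around the cycle and along the path away from `0`, so that each
vertex `b` has a unique in-neighbour `p b` and every edge is `{p b, b}`. An induced matching is
then determined by the set `B` of heads of its edges, and no two heads satisfy `b' = p b` or
`b' = p (p b)`: thus `B`, `p B` and `p (p B)` are disjoint. On the cycle this gives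
`3 |B ∩ C_n| ≤ n`, on the path `3 |B ∩ P| ≤` the number of path vertices from its first head on.
If `{0, n} ∈ M`, the neighbourhood of `0` cuts the cycle down to the path `3, …, n - 2`, which
gives `⌊(n - 2)/3⌋ + ⌊(l + 1)/3⌋`; otherwise the path loses its first edge, which gives
`⌊n/3⌋ + ⌊l/3⌋`. Every third edge of the cycle and of the path, with offsets chosen according to
`n mod 3`, attains the bound.
-/

open Finset

namespace SimpleGraph

variable {V : Type*} {G : SimpleGraph V}

lemma isInducedMatching_empty (G : SimpleGraph V) : G.IsInducedMatching ∅ := by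
  simp [IsInducedMatching]

lemma inducedMatchingNumber_le {k : ℕ} (h : ∀ M, G.IsInducedMatching M → M.card ≤ k) :
    G.inducedMatchingNumber ≤ k :=
  csSup_le ⟨0, ∅, G.isInducedMatching_empty, rfl⟩ (by rintro _ ⟨M, hM, rfl⟩; exact h M hM)

lemma IsInducedMatching.card_le_inducedMatchingNumber (hG : G.edgeSet.Finite)
    {M : Finset (Sym2 V)} (hM : G.IsInducedMatching M) : M.card ≤ G.inducedMatchingNumber := by
  refine le_csSup ⟨hG.toFinset.card, ?_⟩ ⟨M, hM, rfl⟩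
  rintro _ ⟨M', hM', rfl⟩
  exact card_le_card fun e he => hG.mem_toFinset.2 (hM'.1 e he)

end SimpleGraph

theorem three_mul_card_le_card_of_injOn {α : Type*} [DecidableEq α] {S T : Finset α} {p : α → α}
    (hp : Set.InjOn p T) (hS : ∀ b ∈ S, b ∈ T ∧ p b ∈ T ∧ p (p b) ∈ T)
    (hsep : ∀ b ∈ S, ∀ b' ∈ S, b' ≠ p b ∧ b' ≠ p (p b)) : 3 * S.card ≤ T.card := by
  have hinj : Set.InjOn p S := hp.mono fun b hb => (hS b hb).1
  have hinj2 : Set.InjOn (fun b => p (p b)) S := fun b hb b' hb' h =>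
    hinj hb hb' (hp (hS b hb).2.1 (hS b' hb').2.1 h)
  have h01 : Disjoint S (S.image p) := by
    simp only [Finset.disjoint_left, mem_image]
    rintro _ hb ⟨b', hb', rfl⟩
    exact (hsep b' hb' _ hb).1 rfl
  have h02 : Disjoint (S ∪ S.image p) (S.image fun b => p (p b)) := by
    simp only [Finset.disjoint_left, mem_union, mem_image]
    rintro _ (hb | ⟨b, hb, rfl⟩) ⟨b', hb', hbb'⟩
    · exact (hsep b' hb' _ hb).2 hbb'.symm
    · exact (hsep b' hb' b hb).1 (hp (hS b hb).1 (hS b' hb').2.1 hbb'.symm)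
  calc 3 * S.card = (S ∪ S.image p ∪ S.image fun b => p (p b)).card := by
        rw [card_union_of_disjoint h02, card_union_of_disjoint h01, card_image_of_injOn hinj,
          card_image_of_injOn hinj2]
        ring
    _ ≤ T.card := by
        refine card_le_card (union_subset (union_subset ?_ ?_) ?_) <;> intro x hx
        · exact (hS x hx).1
        all_goals obtain ⟨b, hb, rfl⟩ := mem_image.1 hx
        exacts [(hS b hb).2.1, (hS b hb).2.2]

/-- Orienting the cycle and the path of `C_n · P_l` away from `0`, every vertex `b < n + l - 1`
has exactly one in-neighbour `cyclePathParent n b`, and the edges are the pairs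
`{cyclePathParent n b, b}`. -/
def cyclePathParent (n b : ℕ) : ℕ := if b = 0 then n - 1 else if b = n then 0 else b - 1

lemma cyclePathParent_cases (n b : ℕ) :
    (b = 0 ∧ cyclePathParent n b = n - 1) ∨ (b ≠ 0 ∧ b = n ∧ cyclePathParent n b = 0) ∨
      (b ≠ 0 ∧ b ≠ n ∧ cyclePathParent n b = b - 1) := by
  unfold cyclePathParent
  split_ifs <;> omega

lemma zVert_zero (n : ℕ) : zVert n 0 = 0 := rfl

lemma zVert_succ (n k : ℕ) : zVert n (k + 1) = n + k := by
  simp [zVert]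

lemma cyclePathGraph_rel_iff {n l a b : ℕ} (hn : 1 ≤ n) (hl : 1 ≤ l) :
    ((∃ i < n, a = i ∧ b = (i + 1) % n) ∨
        (∃ k, k + 1 < l ∧ a = zVert n k ∧ b = zVert n (k + 1))) ↔
      b < n + l - 1 ∧ a = cyclePathParent n b := by
  constructor
  · rintro (⟨i, hi, rfl, rfl⟩ | ⟨k, hk, rfl, rfl⟩)
    · rcases Nat.lt_or_ge (a + 1) n with h | h
      · rw [Nat.mod_eq_of_lt h]
        have := cyclePathParent_cases n (a + 1)
        omega
      · rw [show a + 1 = n by omega, Nat.mod_self]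
        have := cyclePathParent_cases n 0
        omega
    · have := cyclePathParent_cases n (n + k)
      rw [zVert_succ]
      cases k with
      | zero => exact ⟨by omega, by rw [zVert_zero]; omega⟩
      | succ k => rw [zVert_succ]; omega
  · rintro ⟨hbl, rfl⟩
    have hb := cyclePathParent_cases n b
    rcases Nat.lt_or_ge b n with h | h
    · refine Or.inl ⟨cyclePathParent n b, by omega, rfl, ?_⟩
      rcases hb with ⟨rfl, hp⟩ | ⟨_, rfl, _⟩ | ⟨_, _, hp⟩
      · rw [hp, Nat.sub_add_cancel hn, Nat.mod_self]
      · omega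
      · rw [hp, Nat.sub_add_cancel (by omega), Nat.mod_eq_of_lt h]
    · obtain ⟨k, rfl⟩ : ∃ k, b = n + k := ⟨b - n, by omega⟩
      refine Or.inr ⟨k, by omega, ?_, (zVert_succ n k).symm⟩
      cases k with
      | zero => rw [zVert_zero]; omega
      | succ k => rw [zVert_succ]; omega

lemma cyclePathGraph_adj_iff {n l a b : ℕ} (hn : 2 ≤ n) (hl : 1 ≤ l) :
    (cyclePathGraph n l).Adj a b ↔
      (b < n + l - 1 ∧ a = cyclePathParent n b) ∨ (a < n + l - 1 ∧ b = cyclePathParent n a) := by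
  rw [cyclePathGraph, fromRel_adj, cyclePathGraph_rel_iff (by omega) hl,
    cyclePathGraph_rel_iff (by omega) hl]
  have := cyclePathParent_cases n a
  have := cyclePathParent_cases n b
  constructor
  · exact fun h => h.2
  · intro h
    exact ⟨by omega, h⟩

section CyclePath

variable {n l : ℕ}

lemma cyclePathParent_ne (hn : 2 ≤ n) (b : ℕ) : cyclePathParent n b ≠ b := by
  have := cyclePathParent_cases n b
  omega

lemma cyclePathParent_parent_ne (hn : 3 ≤ n) (b : ℕ) :
    cyclePathParent n (cyclePathParent n b) ≠ b := by
  have := cyclePathParent_cases n b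
  have := cyclePathParent_cases n (cyclePathParent n b)
  omega

lemma cyclePathParent_lt (hl : 1 ≤ l) {b : ℕ} (hb : b < n + l - 1) :
    cyclePathParent n b < n + l - 1 := by
  have := cyclePathParent_cases n b
  omega

lemma cyclePathGraph_adj_parent (hn : 2 ≤ n) (hl : 1 ≤ l) {b : ℕ} (hb : b < n + l - 1) :
    (cyclePathGraph n l).Adj (cyclePathParent n b) b :=
  (cyclePathGraph_adj_iff hn hl).2 (Or.inl ⟨hb, rfl⟩)

lemma cyclePathGraph_exists_eq_of_mem_edgeSet (hn : 2 ≤ n) (hl : 1 ≤ l) {e : Sym2 ℕ}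
    (he : e ∈ (cyclePathGraph n l).edgeSet) :
    ∃ b < n + l - 1, e = s(cyclePathParent n b, b) := by
  induction e using Sym2.inductionOn with
  | hf a b =>
    rcases (cyclePathGraph_adj_iff hn hl).1 ((cyclePathGraph n l).mem_edgeSet.1 he) with
      ⟨hb, rfl⟩ | ⟨ha, rfl⟩
    exacts [⟨b, hb, rfl⟩, ⟨a, ha, Sym2.eq_swap⟩]

lemma cyclePathGraph_edgeSet_finite (hn : 2 ≤ n) (hl : 1 ≤ l) :
    (cyclePathGraph n l).edgeSet.Finite :=
  ((Set.finite_Iio (n + l - 1)).image fun b => s(cyclePathParent n b, b)).subset fun _ he =>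
    let ⟨b, hb, h⟩ := cyclePathGraph_exists_eq_of_mem_edgeSet hn hl he
    ⟨b, hb, h.symm⟩

lemma cyclePathParent_edge_injective (hn : 3 ≤ n) :
    Function.Injective fun b => s(cyclePathParent n b, b) := by
  intro b b' h
  rcases Sym2.eq_iff.1 h with ⟨-, h⟩ | ⟨h₁, h₂⟩
  · exact h
  · exact absurd (by rw [h₁, ← h₂]) (cyclePathParent_parent_ne hn b)

def cyclePathHeads (n l : ℕ) (M : Finset (Sym2 ℕ)) : Finset ℕ :=
  (range (n + l - 1)).filter fun b => s(cyclePathParent n b, b) ∈ M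

lemma card_le_card_cyclePathHeads (hn : 2 ≤ n) (hl : 1 ≤ l) {M : Finset (Sym2 ℕ)}
    (hM : (cyclePathGraph n l).IsInducedMatching M) : M.card ≤ (cyclePathHeads n l M).card := by
  refine (card_le_card (t := (cyclePathHeads n l M).image fun b => s(cyclePathParent n b, b))
    fun e he => ?_).trans card_image_le
  obtain ⟨b, hb, rfl⟩ := cyclePathGraph_exists_eq_of_mem_edgeSet hn hl (hM.1 e he)
  exact mem_image.2 ⟨b, mem_filter.2 ⟨mem_range.2 hb, he⟩, rfl⟩

lemma not_adj_of_mem_cyclePathHeads (hn : 3 ≤ n) {M : Finset (Sym2 ℕ)}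
    (hM : (cyclePathGraph n l).IsInducedMatching M) {b b' : ℕ}
    (hb : b ∈ cyclePathHeads n l M) (hb' : b' ∈ cyclePathHeads n l M) (hne : b ≠ b') {u v : ℕ}
    (hu : u = cyclePathParent n b ∨ u = b) (hv : v = cyclePathParent n b' ∨ v = b') :
    ¬(cyclePathGraph n l).Adj u v :=
  hM.2 _ (mem_filter.1 hb).2 _ (mem_filter.1 hb').2
    (fun h => hne (cyclePathParent_edge_injective hn h)) u (Sym2.mem_iff.2 hu) v
    (Sym2.mem_iff.2 hv)

lemma cyclePathHeads_separated (hn : 3 ≤ n) (hl : 1 ≤ l) {M : Finset (Sym2 ℕ)}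
    (hM : (cyclePathGraph n l).IsInducedMatching M) {b b' : ℕ}
    (hb : b ∈ cyclePathHeads n l M) (hb' : b' ∈ cyclePathHeads n l M) :
    b' ≠ cyclePathParent n b ∧ b' ≠ cyclePathParent n (cyclePathParent n b) := by
  have hbl := mem_range.1 (mem_filter.1 hb).1
  constructor
  · rintro rfl
    exact not_adj_of_mem_cyclePathHeads hn hM hb hb' (cyclePathParent_ne (by omega) b).symm
      (Or.inr rfl) (Or.inr rfl) (cyclePathGraph_adj_parent (by omega) hl hbl).symm
  · rintro rfl
    exact not_adj_of_mem_cyclePathHeads hn hM hb hb' (cyclePathParent_parent_ne hn b).symm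
      (Or.inl rfl) (Or.inr rfl)
      (cyclePathGraph_adj_parent (by omega) hl (cyclePathParent_lt hl hbl)).symm

lemma eq_cyclePathParent_iff {a b : ℕ} : a = cyclePathParent n b ↔
    (b = 0 ∧ a = n - 1) ∨ (b ≠ 0 ∧ b = n ∧ a = 0) ∨ (b ≠ 0 ∧ b ≠ n ∧ a = b - 1) := by
  have := cyclePathParent_cases n b
  omega

lemma three_mul_card_filter_lt_cyclePathHeads_le (hn : 3 ≤ n) (hl : 1 ≤ l)
    {M : Finset (Sym2 ℕ)} (hM : (cyclePathGraph n l).IsInducedMatching M) :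
    3 * ((cyclePathHeads n l M).filter (· < n)).card ≤ n := by
  simpa using three_mul_card_le_card_of_injOn (T := range n) (p := cyclePathParent n)
    (fun b hb b' hb' h => by
      have := cyclePathParent_cases n b
      have := cyclePathParent_cases n b'
      simp only [coe_range, Set.mem_Iio] at hb hb'
      omega)
    (fun b hb => by
      have := (mem_filter.1 hb).2
      have := cyclePathParent_cases n b
      have := cyclePathParent_cases n (cyclePathParent n b)
      simp only [mem_range]
      omega)
    (fun b hb b' hb' => cyclePathHeads_separated hn hl hM (mem_filter.1 hb).1 (mem_filter.1 hb').1)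

/-- `n ∈ cyclePathHeads n l M` means `{0, n} ∈ M`, so no other edge of `M` meets `0`, `1` or
`n - 1`. -/
lemma mem_Icc_of_mem_cyclePathHeads (hn : 3 ≤ n) (hl : 1 ≤ l) {M : Finset (Sym2 ℕ)}
    (hM : (cyclePathGraph n l).IsInducedMatching M) (hn' : n ∈ cyclePathHeads n l M) {b : ℕ}
    (hb : b ∈ cyclePathHeads n l M) (hbn : b < n) : 3 ≤ b ∧ b ≤ n - 2 := by
  have hnl := mem_range.1 (mem_filter.1 hn').1
  have hpn : cyclePathParent n n = 0 := (eq_cyclePathParent_iff.2 (by omega)).symm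
  have h0 : ∀ u, (u = cyclePathParent n b ∨ u = b) → ¬(cyclePathGraph n l).Adj u 0 :=
    fun u hu => hpn ▸ not_adj_of_mem_cyclePathHeads hn hM hb hn' hbn.ne hu (Or.inl rfl)
  have hadj : ∀ u, u = 1 ∨ u = n - 1 → (cyclePathGraph n l).Adj u 0 := by
    intro u hu
    rw [cyclePathGraph_adj_iff (by omega) hl, eq_cyclePathParent_iff, eq_cyclePathParent_iff]
    omega
  have h₁ : ¬(b = 1 ∨ b = n - 1) := fun h => h0 b (Or.inr rfl) (hadj b h)
  have h₂ : ¬(cyclePathParent n b = 1 ∨ cyclePathParent n b = n - 1) := fun h =>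
    h0 _ (Or.inl rfl) (hadj _ h)
  have := cyclePathParent_cases n b
  omega

lemma three_mul_card_filter_lt_cyclePathHeads_le_of_mem (hn : 3 ≤ n) (hl : 1 ≤ l)
    {M : Finset (Sym2 ℕ)} (hM : (cyclePathGraph n l).IsInducedMatching M)
    (hn' : n ∈ cyclePathHeads n l M) :
    3 * ((cyclePathHeads n l M).filter (· < n)).card ≤ n - 2 := by
  simpa using three_mul_card_le_card_of_injOn (T := Icc 1 (n - 2)) (p := cyclePathParent n)
    (fun b hb b' hb' h => by
      have := cyclePathParent_cases n b
      have := cyclePathParent_cases n b'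
      simp only [coe_Icc, Set.mem_Icc] at hb hb'
      omega)
    (fun b hb => by
      obtain ⟨hb, hbn⟩ := mem_filter.1 hb
      have := mem_Icc_of_mem_cyclePathHeads hn hl hM hn' hb hbn
      have := cyclePathParent_cases n b
      have := cyclePathParent_cases n (cyclePathParent n b)
      simp only [mem_Icc]
      omega)
    (fun b hb b' hb' => cyclePathHeads_separated hn hl hM (mem_filter.1 hb).1 (mem_filter.1 hb').1)

lemma three_mul_card_filter_le_cyclePathHeads_le (hn : 3 ≤ n) (hl : 1 ≤ l)
    {M : Finset (Sym2 ℕ)} (hM : (cyclePathGraph n l).IsInducedMatching M) {lo : ℕ}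
    (h : ∀ b ∈ cyclePathHeads n l M, n ≤ b → lo ≤ b) :
    3 * ((cyclePathHeads n l M).filter (n ≤ ·)).card ≤ n + l + 1 - lo := by
  simpa using three_mul_card_le_card_of_injOn (T := Icc lo (n + l)) (p := (· + 1))
    (add_left_injective 1).injOn
    (fun b hb => by
      obtain ⟨hb, hnb⟩ := mem_filter.1 hb
      have := h b hb hnb
      have := mem_range.1 (mem_filter.1 hb).1
      simp only [mem_Icc]
      omega)
    (fun b hb b' hb' => by
      have hsep := cyclePathHeads_separated hn hl hM (mem_filter.1 hb').1 (mem_filter.1 hb).1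
      have := (mem_filter.1 hb).2
      have := cyclePathParent_cases n b'
      have := cyclePathParent_cases n (cyclePathParent n b')
      omega)

theorem cyclePathGraph_inducedMatchingNumber_le (hn : 3 ≤ n) (hl : 1 ≤ l) :
    (cyclePathGraph n l).inducedMatchingNumber ≤ n / 3 + (l - xi3 n + 1) / 3 := by
  refine SimpleGraph.inducedMatchingNumber_le fun M hM => ?_
  have hsplit := card_filter_add_card_filter_not (s := cyclePathHeads n l M) (· < n)
  simp only [not_lt] at hsplit
  have hMB := card_le_card_cyclePathHeads (by omega) hl hM
  have hcyc := three_mul_card_filter_lt_cyclePathHeads_le hn hl hM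
  unfold xi3
  by_cases h₀ : n ∈ cyclePathHeads n l M
  · have := three_mul_card_filter_lt_cyclePathHeads_le_of_mem hn hl hM h₀
    have := three_mul_card_filter_le_cyclePathHeads_le hn hl hM (lo := n) fun _ _ h => h
    split_ifs <;> omega
  have hlo : ∀ b ∈ cyclePathHeads n l M, n ≤ b → n + 1 ≤ b := fun b hb h => by
    have : b ≠ n := fun h' => h₀ (h' ▸ hb)
    omega
  by_cases h₁ : n + 1 ∈ cyclePathHeads n l M
  · have := three_mul_card_filter_le_cyclePathHeads_le hn hl hM hlo
    split_ifs <;> omega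
  · have := three_mul_card_filter_le_cyclePathHeads_le hn hl hM (lo := n + 2) fun b hb h => by
      have : b ≠ n + 1 := fun h' => h₁ (h' ▸ hb)
      have := hlo b hb h
      omega
    split_ifs <;> omega

/-- The witness consists of the cycle edges `{c - 1 + 3 t, c + 3 t}`, `t < N`, and the path edges
with far ends `n + d + 3 s`, `s < L`. -/
theorem le_cyclePathGraph_inducedMatchingNumber (hn : 3 ≤ n) (hl : 1 ≤ l) {c d N L : ℕ}
    (hc : 2 ≤ c) (hN : c + 3 * N ≤ n + 2) (hL : d + 3 * L ≤ l + 1)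
    (hd : d = 0 → 3 ≤ c ∧ c + 3 * N ≤ n + 1) :
    N + L ≤ (cyclePathGraph n l).inducedMatchingNumber := by
  set H := (range N).image (c + 3 * ·) ∪ (range L).image (n + d + 3 * ·)
  have hH : ∀ b ∈ H, (∃ t < N, b = c + 3 * t) ∨ (∃ s < L, b = n + d + 3 * s) := by
    simp only [H, mem_union, mem_image, mem_range]
    rintro b (⟨t, ht, rfl⟩ | ⟨s, hs, rfl⟩)
    exacts [Or.inl ⟨t, ht, rfl⟩, Or.inr ⟨s, hs, rfl⟩]
  have hcard : H.card = N + L := by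
    rw [card_union_of_disjoint, card_image_of_injective _ fun _ _ h => by simpa using h,
      card_image_of_injective _ fun _ _ h => by simpa using h, card_range, card_range]
    simp only [Finset.disjoint_left, mem_image, mem_range]
    rintro _ ⟨t, ht, rfl⟩ ⟨s, hs, h⟩
    omega
  have hIM : (cyclePathGraph n l).IsInducedMatching
      (H.image fun b => s(cyclePathParent n b, b)) := by
    refine ⟨fun e he => ?_, fun e he f hf hef u hu v hv => ?_⟩
    · obtain ⟨b, hb, rfl⟩ := mem_image.1 he
      exact cyclePathGraph_adj_parent (by omega) hl
        (by rcases hH b hb with ⟨t, ht, rfl⟩ | ⟨s, hs, rfl⟩ <;> omega)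
    · obtain ⟨b, hb, rfl⟩ := mem_image.1 he
      obtain ⟨b', hb', rfl⟩ := mem_image.1 hf
      have hne : b ≠ b' := fun h => hef (h ▸ rfl)
      simp only [Sym2.mem_iff, eq_cyclePathParent_iff] at hu hv
      simp only [cyclePathGraph_adj_iff (by omega : 2 ≤ n) hl, eq_cyclePathParent_iff]
      rcases hH b hb with ⟨t, ht, rfl⟩ | ⟨s, hs, rfl⟩ <;>
        rcases hH b' hb' with ⟨t', ht', rfl⟩ | ⟨s', hs', rfl⟩ <;> omega
  have := hIM.card_le_inducedMatchingNumber (cyclePathGraph_edgeSet_finite (by omega) hl)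
  rwa [card_image_of_injective _ (cyclePathParent_edge_injective hn), hcard] at this

end CyclePath

/-- For `n ≥ 3` and `l ≥ 1`, `ν(C_n · P_l) = ⌊n/3⌋ + ⌊(l - ξ₃(n) + 1)/3⌋`. -/
theorem inducedMatchingNumber_cyclePathGraph (n l : ℕ) (hn : 3 ≤ n) (hl : 1 ≤ l) :
    (cyclePathGraph n l).inducedMatchingNumber = n / 3 + (l - xi3 n + 1) / 3 := by
  refine le_antisymm (cyclePathGraph_inducedMatchingNumber_le hn hl) ?_
  unfold xi3
  split_ifs with h
  · exact le_cyclePathGraph_inducedMatchingNumber hn hl (c := 3) (d := 0) (by omega)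
      (by omega) (by omega) fun _ => ⟨le_rfl, by omega⟩
  · exact le_cyclePathGraph_inducedMatchingNumber hn hl (c := 2) (d := 1) le_rfl
      (by omega) (by omega) (by omega)
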